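/- arXiv:math/9805004 — 2 statements merged into one kernel-verified Lean document; each statement's English description precedes it below -/
import Mathlib

section
/- Let α = -2sin(8π/7)/√7, β = -2sin(4π/7)/√7, γ = -2sin(2π/7)/√7, and let ω be the symmetric 3×3 matrix with rows (α,β,γ), (β,γ,α), (γ,α,β). Then ω² is the identity matrix. -/
/-!
A matrix with rows `(a, b, c)`, `(b, c, a)`, `(c, a, b)` squares to the matrix with
`a² + b² + c²` on the diagonal and `ab + bc + ca` off it. For the sines of `2π/7`, `4π/7`,
`8π/7` (an orbit of doubling mod `2π`), the half-angle formula reduces the sum of squares to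
`cos (2π/7) + cos (4π/7) + cos (6π/7) = -1/2`, the real part of the vanishing sum of the
seventh roots of unity, and product-to-sum makes the mixed sum telescope to `0`.
-/

open Real

lemma Matrix.anticirculant_mul_self_eq_one {R : Type*} [CommRing R] {a b c : R}
    (hsq : a ^ 2 + b ^ 2 + c ^ 2 = 1) (hmul : a * b + b * c + c * a = 0) :
    !![a, b, c; b, c, a; c, a, b] * !![a, b, c; b, c, a; c, a, b] = 1 := by
  ext i j
  fin_cases i <;> fin_cases j <;> simp [Matrix.mul_apply, Fin.sum_univ_succ] <;>
    first | linear_combination hsq | linear_combination hmul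

lemma Real.sum_range_cos_two_pi_div_mul {n : ℕ} (hn : 2 ≤ n) :
    ∑ i ∈ Finset.range n, cos (2 * π / n * i) = 0 := by
  have hsin : sin (2 * π / n / 2) ≠ 0 := by
    apply (sin_pos_of_pos_of_lt_pi (by positivity) _).ne'
    rw [div_div, div_lt_iff₀ (by positivity)]
    have : (2 : ℝ) ≤ n := by exact_mod_cast hn
    nlinarith [pi_pos]
  have h := sin_mul_sum_cos n (2 * π / n) 0
  simp only [add_zero] at h
  rw [show (n : ℝ) * (2 * π / n) / 2 = π by field_simp, sin_pi, zero_mul] at h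
  exact (mul_eq_zero.mp h).resolve_left hsin

lemma cos_two_pi_div_seven_add_cos_add_cos :
    cos (2 * π / 7) + cos (4 * π / 7) + cos (6 * π / 7) = -1 / 2 := by
  have h := Real.sum_range_cos_two_pi_div_mul (n := 7) (by norm_num)
  simp only [Finset.sum_range_succ, Finset.sum_range_zero] at h
  have h4 : cos (2 * π / 7 * 4) = cos (6 * π / 7) := by
    rw [← cos_two_pi_sub]; ring_nf
  have h5 : cos (2 * π / 7 * 5) = cos (4 * π / 7) := by
    rw [← cos_two_pi_sub]; ring_nf
  have h6 : cos (2 * π / 7 * 6) = cos (2 * π / 7) := by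
    rw [← cos_two_pi_sub]; ring_nf
  push_cast at h
  rw [h4, h5, h6] at h
  ring_nf at h ⊢
  rw [cos_zero] at h
  linarith

lemma sin_sq_add_sin_sq_add_sin_sq_seventh :
    sin (8 * π / 7) ^ 2 + sin (4 * π / 7) ^ 2 + sin (2 * π / 7) ^ 2 = 7 / 4 := by
  have h8 : cos (2 * (8 * π / 7)) = cos (2 * π / 7) := by
    rw [show 2 * (8 * π / 7) = 2 * π / 7 + 2 * π by ring, cos_add_two_pi]
  have h4 : cos (2 * (4 * π / 7)) = cos (6 * π / 7) := by
    rw [← cos_two_pi_sub]; ring_nf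
  have h2 : cos (2 * (2 * π / 7)) = cos (4 * π / 7) := by ring_nf
  rw [sin_sq_eq_half_sub, sin_sq_eq_half_sub, sin_sq_eq_half_sub, h8, h4, h2]
  linarith [cos_two_pi_div_seven_add_cos_add_cos]

lemma sin_mul_sin_add_sin_mul_sin_add_sin_mul_sin_seventh :
    sin (8 * π / 7) * sin (4 * π / 7) + sin (4 * π / 7) * sin (2 * π / 7)
      + sin (2 * π / 7) * sin (8 * π / 7) = 0 := by
  have h84 := two_mul_sin_mul_sin (8 * π / 7) (4 * π / 7)
  have h42 := two_mul_sin_mul_sin (4 * π / 7) (2 * π / 7)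
  have h28 := two_mul_sin_mul_sin (2 * π / 7) (8 * π / 7)
  have c12 : cos (8 * π / 7 + 4 * π / 7) = cos (2 * π / 7) := by
    rw [← cos_two_pi_sub]; ring_nf
  have c10 : cos (2 * π / 7 + 8 * π / 7) = cos (4 * π / 7) := by
    rw [← cos_two_pi_sub]; ring_nf
  have c6 : cos (2 * π / 7 - 8 * π / 7) = cos (4 * π / 7 + 2 * π / 7) := by
    rw [← cos_neg]; ring_nf
  rw [c12] at h84
  rw [c10, c6] at h28
  ring_nf at h84 h42 h28 ⊢
  linarith

/-- The symmetric circulant-type matrix `ω` built from `α = -2sin(8π/7)/√7`,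
`β = -2sin(4π/7)/√7`, `γ = -2sin(2π/7)/√7` squares to the identity. -/
theorem omega_sq_eq_one
    (α β γ : ℝ)
    (hα : α = -2 * Real.sin (8 * π / 7) / Real.sqrt 7)
    (hβ : β = -2 * Real.sin (4 * π / 7) / Real.sqrt 7)
    (hγ : γ = -2 * Real.sin (2 * π / 7) / Real.sqrt 7)
    (ω : Matrix (Fin 3) (Fin 3) ℝ)
    (hω : ω = !![α, β, γ; β, γ, α; γ, α, β]) :
    ω * ω = 1 := by
  subst hα hβ hγ hω
  apply Matrix.anticirculant_mul_self_eq_one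
  · simp only [div_pow, sq_sqrt (by norm_num : (0 : ℝ) ≤ 7)]
    linear_combination (4 / 7) * sin_sq_add_sin_sq_add_sin_sq_seventh
  · simp only [div_mul_div_comm, mul_self_sqrt (by norm_num : (0 : ℝ) ≤ 7)]
    linear_combination (4 / 7) * sin_mul_sin_add_sin_mul_sin_add_sin_mul_sin_seventh
end

section
/- Let d, m, r, g be natural numbers with m ≥ 2, d ≤ 3m, and 2g - 2 ≤ (d-1)(d-2) - r·m(m-1) - 2 (equivalently g ≤ (d-1)(d-2)/2 - r·m(m-1)/2). If g ≥ 0, then r ≤ 10. -/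
/-- Arithmetic core of the orbit bound for singular points: if `m ≥ 2`, `d ≤ 3m` and
`2g - 2 ≤ (d-1)(d-2) - r·m(m-1) - 2`, then `r ≤ 10`. -/
theorem orbit_bound_arith (d m r g : ℕ) (hm : 2 ≤ m) (hd : d ≤ 3 * m)
    (hgenus : 2 * (g : ℤ) - 2 ≤ ((d : ℤ) - 1) * ((d : ℤ) - 2) - (r : ℤ) * (m : ℤ) * ((m : ℤ) - 1) - 2) :
    r ≤ 10 := by
  by_contra h
  push_neg at h
  have hr : (11 : ℤ) ≤ r := by exact_mod_cast h
  have hm' : (2 : ℤ) ≤ m := by exact_mod_cast hm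
  have hd' : (d : ℤ) ≤ 3 * m := by exact_mod_cast hd
  have hg : (0 : ℤ) ≤ g := Int.natCast_nonneg g
  have hd0 : (0 : ℤ) ≤ d := Int.natCast_nonneg d
  nlinarith [mul_nonneg (sub_nonneg.2 hd0) (sub_nonneg.2 hd0), sq_nonneg ((d:ℤ) - 3*m), mul_le_mul_of_nonneg_right hr (by nlinarith : (0:ℤ) ≤ (m:ℤ)*((m:ℤ)-1))]
end
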